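/- arXiv:0710.0155 — 2 statements merged into one kernel-verified Lean document; each statement's English description precedes it below -/
import Mathlib

section
/- There exists a closed subset F of Z (namely F = {Q ∈ Z : ∀n, n < q_n < n+1}) such that the characteristic function 1_F : Z → {0,1} is not first return recoverable: for every dense sequence D = (x_p) of Z there exists x ∈ Z such that the sequence (1_F(s'_n[x,D]))_n does not converge to 1_F(x). -/
open Filter Topology Set Classical

noncomputable section
open scoped Classical

/-- A set is Fσ if it is a countable union of closed sets. -/
def IsFsigma {X : Type*} [TopologicalSpace X] (s : Set X) : Prop :=
  ∃ F : ℕ → Set X, (∀ n, IsClosed (F n)) ∧ s = ⋃ n, F n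

/-- A function is Baire class one if the preimage of every open set is Fσ. -/
def BaireClassOneFn {X Y : Type*} [TopologicalSpace X] [TopologicalSpace Y] (f : X → Y) : Prop :=
  ∀ U : Set Y, IsOpen U → IsFsigma (f ⁻¹' U)

/-- A countable basis `(W m)` is good if for every open `U` and `x ∈ U` there is `m₀`
such that for all `m ≥ m₀`, `x ∈ W m` implies `W m ⊆ U`. -/
def IsGoodBasis {X : Type*} [TopologicalSpace X] (W : ℕ → Set X) : Prop :=
  TopologicalSpace.IsTopologicalBasis (Set.range W) ∧
  ∀ U : Set X, IsOpen U → ∀ x ∈ U, ∃ m₀, ∀ m ≥ m₀, x ∈ W m → W m ⊆ U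

/-- The path to `x` based on the dense sequence `D`, relative to the good basis `W`. -/
noncomputable def pathSeq {X : Type*} (W : ℕ → Set X) (D : ℕ → X) (x : X) : ℕ → X
  | 0 => D 0
  | n + 1 =>
    if x = pathSeq W D x n then pathSeq W D x n
    else D (sInf {p | ∃ m, x ∈ W m ∧ D p ∈ W m ∧ ∀ k, k ≤ n → pathSeq W D x k ∉ W m})
  termination_by n => n
  decreasing_by all_goals omega

/-- `f` is recoverable with respect to `D` (and the good basis `W`). -/
def RecoverableWith {X Y : Type*} [TopologicalSpace Y] (W : ℕ → Set X) (D : ℕ → X)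
    (f : X → Y) : Prop :=
  ∀ x : X, Tendsto (fun n => f (pathSeq W D x n)) atTop (𝓝 (f x))

/-- The (first return) route to `x` based on the dense sequence `D`, relative to a
distance function `d`. -/
noncomputable def routeSeq {X : Type*} (d : X → X → ℝ) (D : ℕ → X) (x : X) : ℕ → X
  | 0 => D 0
  | n + 1 =>
    if x = routeSeq d D x n then routeSeq d D x n
    else D (sInf {p | d x (D p) < d x (routeSeq d D x n)})

/-- The space `Z` of strictly increasing sequences of nonnegative rationals tending to `+∞`. -/
def Zsp : Type :=
  {q : ℕ → ℚ // (∀ n, 0 ≤ q n) ∧ StrictMono q ∧ Tendsto q atTop atTop}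

/-- The distance on `Z` : `d(Q,Q') = 2 ^ (- min (q_n, q'_n))` where `n` is the least index
where `Q` and `Q'` differ, and `0` if `Q = Q'`. -/
noncomputable def dZ (Q Q' : Zsp) : ℝ :=
  if Q = Q' then 0
  else (2 : ℝ) ^
    (-((min (Q.1 (sInf {n | Q.1 n ≠ Q'.1 n})) (Q'.1 (sInf {n | Q.1 n ≠ Q'.1 n})) : ℚ) : ℝ))

/-- The set `F = {Q ∈ Z | ∀ n, n < q_n < n+1}`. -/
def Fz : Set Zsp := {Q | ∀ n : ℕ, (n : ℚ) < Q.1 n ∧ Q.1 n < (n : ℚ) + 1}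

/-! The first-return route to `x` moves, at each step, to the first term of `D` strictly closer
to `x`; so its indices are exactly the "records" of `p ↦ dist x (D p)`, and the route visits every
record. The point `x ∈ F` is built coordinate by coordinate: `x_k ∈ (k, k + 1)` is chosen above
the `k`-th coordinate of every earlier term of `D` that agrees with `x` below `k` and still lies
under `k + 1`. Then the first term of `D` that agrees with `x` below `k` and has `k`-th coordinate
at least `k + 1` is a record, so the route passes through it, and it lies outside `F`. -/

section Route

variable {X : Type*} [MetricSpace X]

def IsDistRecord (D : ℕ → X) (x : X) (p : ℕ) : Prop :=
  ∀ q < p, dist x (D p) < dist x (D q)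

variable {D : ℕ → X} {x : X}

theorem exists_routeSeq_succ_eq (hD : DenseRange D) (hx : x ∉ range D) {n r : ℕ}
    (hn : routeSeq dist D x n = D r) (hr : IsDistRecord D x r) :
    ∃ r', routeSeq dist D x (n + 1) = D r' ∧ IsDistRecord D x r' ∧ r < r' ∧
      ∀ p, dist x (D p) < dist x (D r) → r' ≤ p := by
  set S := {p | dist x (D p) < dist x (D r)}
  have hxr : x ≠ D r := fun h => hx ⟨r, h.symm⟩
  have hS : S.Nonempty := Metric.denseRange_iff.1 hD x _ (dist_pos.2 hxr)
  have hs : sInf S ∈ S := Nat.sInf_mem hS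
  have hbefore : ∀ q < sInf S, dist x (D r) ≤ dist x (D q) := fun q hq =>
    not_lt.1 (Nat.notMem_of_lt_sInf hq)
  refine ⟨sInf S, ?_, fun q hq => hs.trans_le (hbefore q hq), ?_,
    fun p hp => Nat.sInf_le hp⟩
  · rw [routeSeq, if_neg (hn ▸ hxr), hn]
  · by_contra! h
    rcases h.eq_or_lt with h | h
    · rw [h] at hs
      exact lt_irrefl _ (show dist x (D r) < dist x (D r) from hs)
    · exact lt_asymm hs (hr _ h)

theorem exists_routeSeq_eq_isDistRecord (hD : DenseRange D) (hx : x ∉ range D) (n : ℕ) :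
    ∃ r, routeSeq dist D x n = D r ∧ IsDistRecord D x r := by
  induction n with
  | zero => exact ⟨0, rfl, fun q hq => absurd hq q.not_lt_zero⟩
  | succ n ih =>
    obtain ⟨r, hn, hr⟩ := ih
    obtain ⟨r', hn', hr', -⟩ := exists_routeSeq_succ_eq hD hx hn hr
    exact ⟨r', hn', hr'⟩

theorem exists_routeSeq_eq_of_isDistRecord (hD : DenseRange D) (hx : x ∉ range D) {P : ℕ}
    (hP : IsDistRecord D x P) {n r : ℕ} (hn : routeSeq dist D x n = D r)
    (hr : IsDistRecord D x r) (hrP : r ≤ P) : ∃ m ≥ n, routeSeq dist D x m = D P := by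
  induction hk : P - r using Nat.strong_induction_on generalizing n r with
  | _ k ih =>
  rcases hrP.eq_or_lt with rfl | hlt
  · exact ⟨n, le_rfl, hn⟩
  obtain ⟨r', hn', hr', hrr', hfirst⟩ := exists_routeSeq_succ_eq hD hx hn hr
  have hr'P : r' ≤ P := hfirst P (hP r hlt)
  obtain ⟨m, hm, hmP⟩ := ih (P - r') (by omega) hn' hr' hr'P rfl
  exact ⟨m, by omega, hmP⟩

theorem frequently_routeSeq_notMem (hD : DenseRange D) (hx : x ∉ range D) {F : Set X}
    (hF : ∃ᶠ p in atTop, IsDistRecord D x p ∧ D p ∉ F) :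
    ∃ᶠ n in atTop, routeSeq dist D x n ∉ F := by
  refine frequently_atTop.2 fun N => ?_
  obtain ⟨r, hN, hr⟩ := exists_routeSeq_eq_isDistRecord hD hx N
  obtain ⟨P, hrP, hP, hPF⟩ := frequently_atTop.1 hF r
  obtain ⟨m, hm, hmP⟩ := exists_routeSeq_eq_of_isDistRecord hD hx hP hN hr hrP
  exact ⟨m, hm, hmP ▸ hPF⟩

end Route

theorem not_tendsto_indicator_one_of_frequently_notMem {ι X : Type*} {l : Filter ι}
    {u : ι → X} {F : Set X} {x : X} (hx : x ∈ F) (hu : ∃ᶠ i in l, u i ∉ F) :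
    ¬ Tendsto (fun i => F.indicator (fun _ => (1 : ℝ)) (u i)) l
      (𝓝 (F.indicator (fun _ => (1 : ℝ)) x)) := by
  intro h
  rw [indicator_of_mem hx] at h
  have hne : ∀ᶠ i in l, F.indicator (fun _ => (1 : ℝ)) (u i) ≠ 0 :=
    h.eventually (isOpen_ne.mem_nhds one_ne_zero)
  obtain ⟨i, hi, hi'⟩ := (hu.and_eventually hne).exists
  exact hi' (indicator_of_notMem hi _)

namespace Zsp

theorem strictMono (Q : Zsp) : StrictMono Q.1 := Q.2.2.1

theorem dZ_le_two_rpow_neg_iff {Q Q' : Zsp} {k : ℕ} :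
    dZ Q Q' ≤ (2 : ℝ) ^ (-(Q.1 k : ℝ)) ↔
      (∀ j < k, Q'.1 j = Q.1 j) ∧ Q.1 k ≤ Q'.1 k := by
  by_cases hQ : Q = Q'
  · subst hQ
    simp only [dZ, if_pos, le_refl, and_true]
    exact ⟨fun _ _ _ => trivial, fun _ => by positivity⟩
  have hne : {n | Q.1 n ≠ Q'.1 n}.Nonempty := by
    by_contra! h
    exact hQ (Subtype.ext (funext fun n => by_contra fun hn => h.subset hn))
  set j₀ := sInf {n | Q.1 n ≠ Q'.1 n}
  have hj₀ : Q.1 j₀ ≠ Q'.1 j₀ := Nat.sInf_mem hne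
  have hbelow : ∀ j < j₀, Q.1 j = Q'.1 j := fun j hj => not_not.1 (Nat.notMem_of_lt_sInf hj)
  rw [dZ, if_neg hQ, Real.rpow_le_rpow_left_iff one_lt_two, neg_le_neg_iff, Rat.cast_le,
    le_min_iff, Q.strictMono.le_iff_le]
  constructor
  · rintro ⟨hkj, hk⟩
    refine ⟨fun j hj => (hbelow j (hj.trans_le hkj)).symm, ?_⟩
    rcases hkj.eq_or_lt with rfl | hkj
    · exact hk
    · exact (hbelow k hkj).le
  · rintro ⟨hag, hk⟩
    have hkj : k ≤ j₀ := not_lt.1 fun h => hj₀ (hag j₀ h).symm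
    exact ⟨hkj, hk.trans (Q'.strictMono.monotone hkj)⟩

def bumpFrom (Q : Zsp) (k : ℕ) : Zsp :=
  ⟨fun j => Q.1 j + if k ≤ j then 1 else 0,
    fun j => add_nonneg (Q.2.1 j) (by split_ifs <;> norm_num),
    Q.strictMono.add_monotone fun i j hij => by split_ifs <;> first | omega | norm_num,
    tendsto_atTop_mono (fun j => le_add_of_nonneg_right (by split_ifs <;> norm_num)) Q.2.2.2⟩

theorem bumpFrom_apply_of_lt (Q : Zsp) {j k : ℕ} (h : j < k) : (Q.bumpFrom k).1 j = Q.1 j := by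
  simp [bumpFrom, not_le.2 h]

theorem bumpFrom_apply_self (Q : Zsp) (k : ℕ) : (Q.bumpFrom k).1 k = Q.1 k + 1 := by
  simp [bumpFrom]

variable (D : ℕ → Zsp)

def exitIndex (k : ℕ) (f : ∀ j, j < k → ℚ) : ℕ :=
  sInf {p | (∀ j (hj : j < k), (D p).1 j = f j hj) ∧ (k : ℚ) + 1 ≤ (D p).1 k}

/-- Letting `p` range also over `p ≤ k` makes `badPoint D` differ from `D k` at coordinate `k`,
so the route to it never stops. -/
def coordBound (k : ℕ) (f : ∀ j, j < k → ℚ) : ℚ :=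
  ((Finset.range (max (exitIndex D k f) (k + 1))).filter fun p =>
      (∀ j (hj : j < k), (D p).1 j = f j hj) ∧ (D p).1 k < k + 1).fold max (k : ℚ)
    fun p => (D p).1 k

theorem le_coordBound (k : ℕ) (f : ∀ j, j < k → ℚ) : (k : ℚ) ≤ coordBound D k f :=
  (Finset.le_fold_max _).2 (Or.inl le_rfl)

theorem coordBound_lt (k : ℕ) (f : ∀ j, j < k → ℚ) : coordBound D k f < k + 1 :=
  (Finset.fold_max_lt _).2 ⟨by linarith, fun _ hp => (Finset.mem_filter.1 hp).2.2⟩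

theorem coord_le_coordBound {k p : ℕ} {f : ∀ j, j < k → ℚ}
    (hp : p < max (exitIndex D k f) (k + 1)) (hag : ∀ j (hj : j < k), (D p).1 j = f j hj)
    (hlt : (D p).1 k < k + 1) : (D p).1 k ≤ coordBound D k f :=
  (Finset.le_fold_max _).2 <|
    Or.inr ⟨p, Finset.mem_filter.2 ⟨Finset.mem_range.2 hp, hag, hlt⟩, le_rfl⟩

def badCoord : ℕ → ℚ
  | k => (coordBound D k (fun j _ => badCoord j) + k + 1) / 2

def badExit (k : ℕ) : ℕ := exitIndex D k fun j _ => badCoord D j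

theorem badCoord_eq (k : ℕ) :
    badCoord D k = (coordBound D k (fun j _ => badCoord D j) + k + 1) / 2 := by
  rw [badCoord]

theorem lt_badCoord (k : ℕ) : (k : ℚ) < badCoord D k := by
  rw [badCoord_eq]
  linarith [le_coordBound D k fun j _ => badCoord D j, coordBound_lt D k fun j _ => badCoord D j]

theorem badCoord_lt (k : ℕ) : badCoord D k < k + 1 := by
  rw [badCoord_eq]
  linarith [coordBound_lt D k fun j _ => badCoord D j]

theorem coord_lt_badCoord {k p : ℕ} (hp : p < max (badExit D k) (k + 1))
    (hag : ∀ j < k, (D p).1 j = badCoord D j) (hlt : (D p).1 k < k + 1) :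
    (D p).1 k < badCoord D k := by
  have := coord_le_coordBound D hp hag hlt
  rw [badCoord_eq]
  linarith [coordBound_lt D k fun j _ => badCoord D j]

def badPoint : Zsp :=
  ⟨badCoord D, fun j => (Nat.cast_nonneg j).trans (lt_badCoord D j).le,
    strictMono_nat_of_lt_succ fun j =>
      (badCoord_lt D j).trans (by exact_mod_cast lt_badCoord D (j + 1)),
    tendsto_atTop_mono (fun j => (lt_badCoord D j).le) tendsto_natCast_atTop_atTop⟩

@[simp]
theorem badPoint_coe : (badPoint D).1 = badCoord D := rfl

theorem badPoint_mem_Fz : badPoint D ∈ Fz := fun k => ⟨lt_badCoord D k, badCoord_lt D k⟩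

theorem badPoint_notMem_range : badPoint D ∉ range D := by
  rintro ⟨p, hp⟩
  have hcoord : ∀ j, (D p).1 j = badCoord D j := by simp [hp]
  have := coord_lt_badCoord D (lt_max_of_lt_right p.lt_succ_self) (fun j _ => hcoord j)
    (hcoord p ▸ badCoord_lt D p)
  exact (hcoord p ▸ this).false

section Metric

variable [MetricSpace Zsp]

theorem isClosed_Fz (hm : ∀ Q Q' : Zsp, dist Q Q' = dZ Q Q') : IsClosed Fz := by
  have hcoord : ∀ n, IsLocallyConstant fun Q : Zsp => Q.1 n := fun n =>
    (IsLocallyConstant.iff_eventually_eq _).2 fun Q => Metric.eventually_nhds_iff.2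
      ⟨(2 : ℝ) ^ (-(Q.1 (n + 1) : ℝ)), by positivity, fun Q' hQ' => by
        rw [dist_comm, hm] at hQ'
        exact (dZ_le_two_rpow_neg_iff.1 hQ'.le).1 n n.lt_succ_self⟩
  have hFz : Fz = ⋂ n : ℕ, (fun Q : Zsp => Q.1 n) ⁻¹' Ioo (n : ℚ) (n + 1) := by
    ext Q
    simp [Fz]
  rw [hFz]
  exact isClosed_iInter fun n => isOpen_compl_iff.1 (hcoord n (Ioo (n : ℚ) (n + 1))ᶜ)

theorem badExit_spec (hm : ∀ Q Q' : Zsp, dist Q Q' = dZ Q Q') (hD : DenseRange D) (k : ℕ) :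
    (∀ j < k, (D (badExit D k)).1 j = badCoord D j) ∧
      (k : ℚ) + 1 ≤ (D (badExit D k)).1 k := by
  obtain ⟨p, hp⟩ := Metric.denseRange_iff.1 hD ((badPoint D).bumpFrom k) _
    (by positivity : (0 : ℝ) < 2 ^ (-(((badPoint D).bumpFrom k).1 (k + 1) : ℝ)))
  rw [hm] at hp
  obtain ⟨hag, -⟩ := dZ_le_two_rpow_neg_iff.1 hp.le
  refine Nat.sInf_mem
    (s := {p | (∀ j < k, (D p).1 j = badCoord D j) ∧ (k : ℚ) + 1 ≤ (D p).1 k})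
    ⟨p, fun j hj => ?_, ?_⟩
  · rw [hag j (by omega), bumpFrom_apply_of_lt _ hj, badPoint_coe]
  · rw [hag k k.lt_succ_self, bumpFrom_apply_self, badPoint_coe]
    linarith [lt_badCoord D k]

theorem isDistRecord_badExit (hm : ∀ Q Q' : Zsp, dist Q Q' = dZ Q Q') (hD : DenseRange D)
    (k : ℕ) : IsDistRecord D (badPoint D) (badExit D k) := by
  obtain ⟨hag, hexit⟩ := badExit_spec D hm hD k
  have hle : dist (badPoint D) (D (badExit D k)) ≤ (2 : ℝ) ^ (-(badCoord D k : ℝ)) := by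
    rw [hm]
    refine dZ_le_two_rpow_neg_iff.2 ⟨hag, ?_⟩
    simp only [badPoint_coe]
    linarith [badCoord_lt D k]
  intro q hq
  refine hle.trans_lt (lt_of_not_ge fun hq' => ?_)
  rw [hm] at hq'
  obtain ⟨hqag, hqk⟩ := dZ_le_two_rpow_neg_iff.1 hq'
  simp only [badPoint_coe] at hqag hqk
  have hq1 : (D q).1 k < k + 1 := lt_of_not_ge fun h => Nat.notMem_of_lt_sInf hq ⟨hqag, h⟩
  exact (coord_lt_badCoord D (lt_max_of_lt_left hq) hqag hq1).not_ge hqk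

theorem badExit_injective (hm : ∀ Q Q' : Zsp, dist Q Q' = dZ Q Q') (hD : DenseRange D) :
    Function.Injective (badExit D) := by
  refine Function.Injective.of_lt_imp_ne fun k k' hkk' h => ?_
  have hk := (badExit_spec D hm hD k).2
  have hk' := (badExit_spec D hm hD k').1 k hkk'
  rw [h, hk'] at hk
  linarith [badCoord_lt D k]

theorem frequently_isDistRecord_notMem_Fz (hm : ∀ Q Q' : Zsp, dist Q Q' = dZ Q Q')
    (hD : DenseRange D) : ∃ᶠ p in atTop, IsDistRecord D (badPoint D) p ∧ D p ∉ Fz :=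
  (badExit_injective D hm hD).nat_tendsto_atTop.frequently <| .of_forall fun k =>
    ⟨isDistRecord_badExit D hm hD k,
      fun hF => ((hF k).2.trans_le (badExit_spec D hm hD k).2).false⟩

end Metric

end Zsp

/-- `F` is a closed subset of `Z` whose characteristic function is not first return
recoverable : for every dense sequence `D` of `Z` there is a point `x` such that
`(1_F(s'_n[x,D]))` does not converge to `1_F(x)`. -/
theorem charFn_Fz_not_firstReturnRecoverable [m : MetricSpace Zsp]
    (hm : ∀ Q Q' : Zsp, dist Q Q' = dZ Q Q') :
    IsClosed Fz ∧
    ∀ D : ℕ → Zsp, DenseRange D → ∃ x : Zsp,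
      ¬ Tendsto (fun n => Fz.indicator (fun _ => (1 : ℝ)) (routeSeq dist D x n)) atTop
          (𝓝 (Fz.indicator (fun _ => (1 : ℝ)) x)) :=
  ⟨Zsp.isClosed_Fz hm, fun D hD => ⟨Zsp.badPoint D,
    not_tendsto_indicator_one_of_frequently_notMem (Zsp.badPoint_mem_Fz D)
      (frequently_routeSeq_notMem hD (Zsp.badPoint_notMem_range D)
        (Zsp.frequently_isDistRecord_notMem_Fz D hm hD))⟩⟩
end
end

section
/- Let X and Y be separable metrizable spaces with a fixed good basis of X, and let A ⊆ B_1(X,Y) be equipped with the pointwise convergence topology. If A is uniformly recoverable and compact, then A is metrizable. -/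
open Filter Topology Set Classical

noncomputable section
open scoped Classical

/-!
Every point of a path `pathSeq W D x` lies in the range of `D`, so a function recoverable with
respect to `D` is determined by its values on `D`. Hence restriction to `D` is a continuous
injection of the compact set `A` into the metrizable countable product `ℕ → Y`, and therefore an
embedding.
-/

open TopologicalSpace

theorem TopologicalSpace.metrizableSpace_pi_of_countable {ι : Type*} [Countable ι]
    {A : ι → Type*} [∀ i, TopologicalSpace (A i)] [∀ i, MetrizableSpace (A i)] :
    MetrizableSpace (∀ i, A i) :=
  let := fun i => pseudoMetrizableSpaceUniformity (A i)
  have := fun i => pseudoMetrizableSpaceUniformity_countably_generated (A i)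
  inferInstance

theorem metrizableSpace_of_isCompact_of_injOn_comp {X Y ι : Type*} [Countable ι]
    [TopologicalSpace Y] [MetrizableSpace Y] {A : Set (X → Y)} (hA : IsCompact A) (D : ι → X)
    (hD : InjOn (fun f => f ∘ D) A) : MetrizableSpace A := by
  have : CompactSpace A := isCompact_iff_compactSpace.mp hA
  have : MetrizableSpace (ι → Y) := metrizableSpace_pi_of_countable
  have hcont : Continuous fun f : A => f.1 ∘ D :=
    continuous_pi fun i => (continuous_apply (D i)).comp continuous_subtype_val
  exact (hcont.isClosedEmbedding hD.injective).isEmbedding.metrizableSpace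

theorem pathSeq_mem_range {X : Type*} (W : ℕ → Set X) (D : ℕ → X) (x : X) (n : ℕ) :
    pathSeq W D x n ∈ range D := by
  induction n with
  | zero => exact ⟨0, by rw [pathSeq]⟩
  | succ n ih =>
    rw [pathSeq]
    split
    · exact ih
    · exact mem_range_self _

theorem RecoverableWith.eq_of_eqOn_range {X Y : Type*} [TopologicalSpace Y] [T2Space Y]
    {W : ℕ → Set X} {D : ℕ → X} {f g : X → Y} (hf : RecoverableWith W D f)
    (hg : RecoverableWith W D g) (hfg : EqOn f g (range D)) : f = g := by
  funext x
  have hpath : (fun n => f (pathSeq W D x n)) = fun n => g (pathSeq W D x n) :=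
    funext fun n => hfg (pathSeq_mem_range W D x n)
  exact tendsto_nhds_unique (hpath ▸ hf x) (hg x)

theorem metrizable_of_uniformlyRecoverable_compact_general {X Y : Type*}
    [TopologicalSpace X]
    [TopologicalSpace Y] [TopologicalSpace.MetrizableSpace Y]
    (W : ℕ → Set X)
    (A : Set (X → Y))
    (hcompact : IsCompact A)
    (hur : ∃ D : ℕ → X, DenseRange D ∧ ∀ f ∈ A, RecoverableWith W D f) :
    TopologicalSpace.MetrizableSpace ↥A := by
  obtain ⟨D, -, hrec⟩ := hur
  exact metrizableSpace_of_isCompact_of_injOn_comp hcompact D fun f hf g hg hfg =>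
    (hrec f hf).eq_of_eqOn_range (hrec g hg) (eqOn_range.mpr hfg)

/-- If `A ⊆ B₁(X,Y)` (with the pointwise convergence topology) is uniformly recoverable
(with respect to the fixed good basis `W`) and compact, then `A` is metrizable. -/
theorem metrizable_of_uniformlyRecoverable_compact {X Y : Type*}
    [TopologicalSpace X] [TopologicalSpace.SeparableSpace X] [TopologicalSpace.MetrizableSpace X]
    [TopologicalSpace Y] [TopologicalSpace.SeparableSpace Y] [TopologicalSpace.MetrizableSpace Y]
    (W : ℕ → Set X) (hW : IsGoodBasis W)
    (A : Set (X → Y)) (hA : ∀ f ∈ A, BaireClassOneFn f)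
    (hcompact : IsCompact A)
    (hur : ∃ D : ℕ → X, DenseRange D ∧ ∀ f ∈ A, RecoverableWith W D f) :
    TopologicalSpace.MetrizableSpace ↥A :=
  metrizable_of_uniformlyRecoverable_compact_general W A hcompact hur
end
end
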